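/- Let G be a simple graph on n vertices having at least one edge and distinct adjacency eigenvalues θ_0 > θ_1 > ⋯ > θ_d with d ≥ 2, and let Δ be the maximum degree of G. There exists a largest eigenvalue θ_i with θ_i ≤ −Δ/θ_0, and for this i one has i ≥ 1 and χ_2(G) ≥ (θ_0 − θ_i)(θ_0 − θ_{i−1}) / (Δ + θ_i·θ_{i−1}). -/

import Mathlib

open Finset Polynomial

/-- The `t`-th power graph: vertices are adjacent when they are distinct and at
graph (geodesic) distance at most `t` in `G`. -/
def powerGraph {V : Type*} (G : SimpleGraph V) (t : ℕ) : SimpleGraph V where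
  Adj u v := u ≠ v ∧ G.Reachable u v ∧ G.dist u v ≤ t
  symm := ⟨by
    rintro u v ⟨h1, h2, h3⟩
    exact ⟨h1.symm, h2.symm, by rwa [SimpleGraph.dist_comm]⟩⟩
  loopless := ⟨fun v h => h.1 rfl⟩

/-- The distance-`t` chromatic number of a graph. -/
noncomputable def distChromaticNumber {V : Type*} (G : SimpleGraph V) (t : ℕ) : ℕ∞ :=
  (powerGraph G t).chromaticNumber

/-- `x` is an eigenvalue of the (real) adjacency matrix of `G`. -/
def IsAdjEigenvalue {V : Type*} [Fintype V] [DecidableEq V] (G : SimpleGraph V)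
    [DecidableRel G.Adj] (x : ℝ) : Prop :=
  ∃ v : V → ℝ, v ≠ 0 ∧ (SimpleGraph.adjMatrix ℝ G).mulVec v = x • v

/-- The hypercube graph `Q_n`. -/
def hypercube (n : ℕ) : SimpleGraph (Fin n → Fin 2) where
  Adj u v := hammingDist u v = 1
  symm := ⟨fun u v (h : hammingDist u v = 1) => show hammingDist v u = 1 by rwa [hammingDist_comm]⟩
  loopless := ⟨fun u (h : hammingDist u u = 1) => by rw [hammingDist_self] at h; exact absurd h (by norm_num)⟩

noncomputable instance (n : ℕ) : DecidableRel (hypercube n).Adj :=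
  fun _ _ => Classical.dec _

/-- The Lee graph `G(n,q)`: the `n`-fold Cartesian product of the `q`-cycle. -/
def leeGraph (n q : ℕ) : SimpleGraph (Fin n → ZMod q) where
  Adj u v := u ≠ v ∧ ∃ i, (u i = v i + 1 ∨ v i = u i + 1) ∧ ∀ j, j ≠ i → u j = v j
  symm := ⟨by
    rintro u v ⟨hne, i, h, hj⟩
    exact ⟨hne.symm, i, h.symm, fun j hji => (hj j hji).symm⟩⟩
  loopless := ⟨fun u h => h.1 rfl⟩

noncomputable instance (n q : ℕ) : DecidableRel (leeGraph n q).Adj :=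
  fun _ _ => Classical.dec _

/-- The Lee distance on `(ℤ/qℤ)^n`. -/
def leeDist {n q : ℕ} (b c : Fin n → ZMod q) : ℕ :=
  ∑ i, min ((b i - c i).val) (q - (b i - c i).val)

open Matrix Real

/-- Quadratic-form lower bound via the spectrum of a symmetric matrix `A`,
for any matrix `M` that is a "polynomial image" of `A` on eigenvectors. -/
lemma eig_quad {n : Type*} [Fintype n] [DecidableEq n] {A : Matrix n n ℝ}
    (hA : A.IsHermitian) (M : Matrix n n ℝ) (p : ℝ → ℝ)
    (hM : ∀ (μ : ℝ) (w : n → ℝ), A *ᵥ w = μ • w → M *ᵥ w = p μ • w)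
    {r : ℝ}
    (hp : ∀ (μ : ℝ) (w : n → ℝ), w ≠ 0 → A *ᵥ w = μ • w → r ≤ p μ) (x : n → ℝ) :
    r * (x ⬝ᵥ x) ≤ x ⬝ᵥ (M *ᵥ x) := by
  classical
  set U : Matrix n n ℝ := (hA.eigenvectorUnitary : Matrix n n ℝ) with hUdef
  have hUm : U * star U = 1 := Matrix.mem_unitaryGroup_iff.mp hA.eigenvectorUnitary.2
  have hstar : star U = Uᵀ := by
    rw [Matrix.star_eq_conjTranspose, conjTranspose_eq_transpose_of_trivial]
  have hbne : ∀ j, (⇑(hA.eigenvectorBasis j) : n → ℝ) ≠ 0 := by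
    intro j h0
    exact hA.eigenvectorBasis.orthonormal.ne_zero j (by ext i; exact congrFun h0 i)
  have hr : ∀ j, r ≤ p (hA.eigenvalues j) := fun j =>
    hp _ _ (hbne j) (hA.mulVec_eigenvectorBasis j)
  have hcol : ∀ j, (fun i => U i j) = ⇑(hA.eigenvectorBasis j) := by
    intro j; ext i; exact hA.eigenvectorUnitary_apply i j
  have hMU : M * U = U * diagonal (fun j => p (hA.eigenvalues j)) := by
    ext i j
    have h1 : M *ᵥ (fun i => U i j) = p (hA.eigenvalues j) • (fun i => U i j) := by
      rw [hcol j]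
      exact hM _ _ (hA.mulVec_eigenvectorBasis j)
    have h2 := congrFun h1 i
    simp only [mulVec, dotProduct, Pi.smul_apply, smul_eq_mul] at h2
    rw [Matrix.mul_apply, Matrix.mul_apply]
    rw [show ∑ k, M i k * U k j = p (hA.eigenvalues j) * U i j from h2]
    rw [Finset.sum_eq_single j (fun b _ hb => by simp [diagonal, hb]) (by simp)]
    simp [diagonal, mul_comm]
  set y := (star U) *ᵥ x with hy
  have hUy : U *ᵥ y = x := by rw [hy, mulVec_mulVec, hUm, one_mulVec]
  have hvm : y ᵥ* (star U) = x := by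
    rw [← mulVec_transpose, hstar, transpose_transpose, hUy]
  have hxy : x ⬝ᵥ x = y ⬝ᵥ y := by
    have h1 : y ⬝ᵥ (star U *ᵥ x) = (y ᵥ* star U) ⬝ᵥ x := dotProduct_mulVec y (star U) x
    rw [hvm] at h1
    rw [← hy] at h1
    rw [← h1, dotProduct_comm]
  have hxU : x ᵥ* U = y := by
    rw [← mulVec_transpose, ← hstar, hy]
  have hMxv : M *ᵥ x = U *ᵥ ((diagonal fun j => p (hA.eigenvalues j)) *ᵥ y) :=
    calc M *ᵥ x = M *ᵥ (U *ᵥ y) := by rw [hUy]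
    _ = (M * U) *ᵥ y := mulVec_mulVec y M U
    _ = (U * diagonal fun j => p (hA.eigenvalues j)) *ᵥ y := by rw [hMU]
    _ = U *ᵥ ((diagonal fun j => p (hA.eigenvalues j)) *ᵥ y) :=
        (mulVec_mulVec y U _).symm
  have hMx : x ⬝ᵥ (M *ᵥ x) = ∑ j, p (hA.eigenvalues j) * (y j)^2 := by
    rw [hMxv, dotProduct_mulVec, hxU, dotProduct]
    refine Finset.sum_congr rfl fun j _ => ?_
    rw [mulVec_diagonal]; ring
  rw [hMx, hxy, dotProduct, Finset.mul_sum]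
  refine Finset.sum_le_sum fun j _ => ?_
  have := hr j
  nlinarith [sq_nonneg (y j)]

/-- Orthogonality of the `k`-th roots of unity, real form. -/
lemma cos_sin_sum {k : ℕ} (hk : 0 < k) (p q : ℕ) (hp : p < k) (hq : q < k) :
    ∑ t ∈ Finset.range k,
      (Real.cos (2*π*t*p/k) * Real.cos (2*π*t*q/k)
        + Real.sin (2*π*t*p/k) * Real.sin (2*π*t*q/k))
      = if p = q then (k : ℝ) else 0 := by
  have hterm : ∀ t : ℕ, Real.cos (2*π*t*p/k) * Real.cos (2*π*t*q/k)
      + Real.sin (2*π*t*p/k) * Real.sin (2*π*t*q/k)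
      = Real.cos (2*π*t*((p:ℝ)-(q:ℝ))/k) := by
    intro t
    rw [← Real.cos_sub]
    congr 1
    field_simp
  by_cases hpq : p = q
  · subst hpq
    simp only [hterm, sub_self, mul_zero, zero_div, zero_mul, Real.cos_zero]
    simp
  · simp only [hterm, if_neg hpq]
    -- pass to complex exponentials
    set m : ℤ := (p : ℤ) - (q : ℤ) with hm
    have hmR : ((p:ℝ) - (q:ℝ)) = (m : ℝ) := by push_cast [hm]; ring
    set w : ℂ := Complex.exp (2*π*(m:ℝ)/k * Complex.I) with hw
    have hterm2 : ∀ t : ℕ, Real.cos (2*π*t*((p:ℝ)-(q:ℝ))/k) = (w ^ t).re := by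
      intro t
      rw [hw, ← Complex.exp_nat_mul]
      rw [show (t : ℂ) * (2*π*(m:ℝ)/k * Complex.I) = ((2*π*t*((p:ℝ)-(q:ℝ))/k : ℝ) : ℂ) * Complex.I by
        push_cast [hmR]
        have : (k : ℂ) ≠ 0 := Nat.cast_ne_zero.mpr hk.ne'
        field_simp]
      rw [Complex.exp_mul_I, Complex.add_re, Complex.mul_re, Complex.I_re, Complex.I_im,
        Complex.cos_ofReal_re, Complex.sin_ofReal_im]
      ring
    have hw1 : w ≠ 1 := by
      rw [hw, Ne, Complex.exp_eq_one_iff]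
      rintro ⟨n, hn⟩
      have hkC : (k : ℂ) ≠ 0 := Nat.cast_ne_zero.mpr hk.ne'
      have hIC : (Complex.I : ℂ) ≠ 0 := Complex.I_ne_zero
      have hπ : (π : ℂ) ≠ 0 := by
        simpa using Complex.ofReal_ne_zero.mpr Real.pi_ne_zero
      have hmn : (m : ℂ) = n * k := by
        have h20 : (2 * (π:ℂ) * Complex.I) ≠ 0 :=
          mul_ne_zero (mul_ne_zero two_ne_zero hπ) hIC
        apply mul_left_cancel₀ h20
        field_simp at hn
        linear_combination (2 * (π:ℂ) * Complex.I) * hn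
      have hZ : m = n * k := by exact_mod_cast hmn
      have hb1 : -(k:ℤ) < m := by omega
      have hb2 : m < (k:ℤ) := by omega
      have hm0 : m ≠ 0 := by omega
      rcases lt_trichotomy n 0 with h | h | h
      · have hnk : n * (k:ℤ) ≤ (-1) * k :=
          mul_le_mul_of_nonneg_right (by omega) (by positivity)
        linarith [hZ, hb1, hnk]
      · subst h; simp at hZ; omega
      · have hnk : 1 * (k:ℤ) ≤ n * k :=
          mul_le_mul_of_nonneg_right (by omega) (by positivity)
        linarith [hZ, hb2, hnk]
    have hwk : w ^ k = 1 := by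
      rw [hw, ← Complex.exp_nat_mul]
      rw [show (k:ℂ) * (2*π*(m:ℝ)/k * Complex.I) = (m : ℂ) * (2*π*Complex.I) by
        have : (k : ℂ) ≠ 0 := Nat.cast_ne_zero.mpr hk.ne'
        push_cast
        field_simp]
      exact Complex.exp_int_mul_two_pi_mul_I m
    have : ∑ t ∈ Finset.range k, w ^ t = 0 := by
      rw [geom_sum_eq hw1, hwk, sub_self, zero_div]
    calc ∑ t ∈ Finset.range k, Real.cos (2*π*t*((p:ℝ)-(q:ℝ))/k)
        = (∑ t ∈ Finset.range k, w ^ t).re := by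
          rw [Complex.re_sum]
          exact Finset.sum_congr rfl fun t _ => hterm2 t
      _ = 0 := by rw [this]; simp

lemma hoffman_core {V : Type*} [Fintype V] [DecidableEq V] (E : Matrix V V ℝ)
    (k : ℕ) (hk : 0 < k) (f : V → Fin k)
    (hEzero : ∀ v w, f v = f w → E v w = 0)
    (u : V → ℝ) (R L : ℝ)
    (huE : R * (u ⬝ᵥ u) ≤ u ⬝ᵥ (E *ᵥ u))
    (hlow : ∀ x : V → ℝ, -L * (x ⬝ᵥ x) ≤ x ⬝ᵥ (E *ᵥ x)) :
    R * (u ⬝ᵥ u) ≤ ((k : ℝ) - 1) * (L * (u ⬝ᵥ u)) := by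
  classical
  have hdot : ∀ (x : V → ℝ), x ⬝ᵥ (E *ᵥ x) = ∑ v, ∑ w, x v * E v w * x w := by
    intro x
    simp only [dotProduct, mulVec, Finset.mul_sum]
    exact Finset.sum_congr rfl fun v _ => Finset.sum_congr rfl fun w _ =>
      (mul_assoc _ _ _).symm
  set ct : ℕ → V → ℝ := fun t v => Real.cos (2*π*t*(f v : ℕ)/k) * u v with hct
  set st : ℕ → V → ℝ := fun t v => Real.sin (2*π*t*(f v : ℕ)/k) * u v with hst
  set g : ℕ → ℝ := fun t => (ct t) ⬝ᵥ (E *ᵥ (ct t)) + (st t) ⬝ᵥ (E *ᵥ (st t)) with hg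
  have hnorm : ∀ t, (ct t) ⬝ᵥ (ct t) + (st t) ⬝ᵥ (st t) = u ⬝ᵥ u := by
    intro t
    simp only [hct, hst, dotProduct, ← Finset.sum_add_distrib]
    refine Finset.sum_congr rfl fun v _ => ?_
    linear_combination (u v * u v) * (Real.sin_sq_add_cos_sq (2*π*t*(f v : ℕ)/k))
  have hS1 : ∑ t ∈ Finset.range k, g t = 0 := by
    have step1 : ∀ t, g t = ∑ v, ∑ w, (E v w * u v * u w) *
        (Real.cos (2*π*t*(f v : ℕ)/k) * Real.cos (2*π*t*(f w : ℕ)/k)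
          + Real.sin (2*π*t*(f v : ℕ)/k) * Real.sin (2*π*t*(f w : ℕ)/k)) := by
      intro t
      rw [hg]
      simp only [hdot]
      rw [← Finset.sum_add_distrib]
      refine Finset.sum_congr rfl fun v _ => ?_
      rw [← Finset.sum_add_distrib]
      refine Finset.sum_congr rfl fun w _ => ?_
      simp only [hct, hst]
      ring
    calc ∑ t ∈ Finset.range k, g t
        = ∑ v, ∑ w, (E v w * u v * u w) * ∑ t ∈ Finset.range k,
            (Real.cos (2*π*t*(f v : ℕ)/k) * Real.cos (2*π*t*(f w : ℕ)/k)
              + Real.sin (2*π*t*(f v : ℕ)/k) * Real.sin (2*π*t*(f w : ℕ)/k)) := by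
          simp only [step1]
          rw [Finset.sum_comm]
          refine Finset.sum_congr rfl fun v _ => ?_
          rw [Finset.sum_comm]
          refine Finset.sum_congr rfl fun w _ => ?_
          rw [Finset.mul_sum]
      _ = 0 := by
          refine Finset.sum_eq_zero fun v _ => Finset.sum_eq_zero fun w _ => ?_
          rw [cos_sin_sum hk _ _ (Fin.is_lt _) (Fin.is_lt _)]
          by_cases h : f v = f w
          · rw [hEzero v w h]; ring
          · rw [if_neg (fun hvw => h (Fin.ext hvw))]; ring
  have hmem0 : (0 : ℕ) ∈ Finset.range k := Finset.mem_range.mpr hk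
  have hct0 : ct 0 = u := by
    funext v; simp [hct]
  have hst0 : st 0 = fun _ => (0:ℝ) := by
    funext v; simp [hst]
  have hg0 : R * (u ⬝ᵥ u) ≤ g 0 := by
    rw [hg]
    simp only [hct0, hst0]
    have : (fun _ => (0:ℝ)) ⬝ᵥ (E *ᵥ (fun _ => (0:ℝ))) = 0 := by
      simp [dotProduct]
    rw [this, add_zero]
    exact huE
  have hgt : ∀ t, -L * (u ⬝ᵥ u) ≤ g t := by
    intro t
    have h1 := hlow (ct t)
    have h2 := hlow (st t)
    show -L * (u ⬝ᵥ u) ≤ ct t ⬝ᵥ (E *ᵥ ct t) + st t ⬝ᵥ (E *ᵥ st t)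
    rw [← hnorm t]
    nlinarith [h1, h2]
  have hsplit := (Finset.add_sum_erase (Finset.range k) g hmem0).symm
  have hcard : ((Finset.range k).erase 0).card = k - 1 := by
    rw [Finset.card_erase_of_mem hmem0, Finset.card_range]
  have hrest : ((k:ℝ) - 1) * (-L * (u ⬝ᵥ u)) ≤ ∑ t ∈ (Finset.range k).erase 0, g t := by
    have h1 : ∑ t ∈ (Finset.range k).erase 0, (-L * (u ⬝ᵥ u)) ≤ ∑ t ∈ (Finset.range k).erase 0, g t :=
      Finset.sum_le_sum fun t _ => hgt t
    rw [Finset.sum_const, hcard] at h1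
    have h2 : ((k - 1 : ℕ) : ℝ) = (k:ℝ) - 1 := by
      rw [Nat.cast_sub hk]; simp
    rw [nsmul_eq_mul, h2] at h1
    exact h1
  nlinarith [hg0, hrest, hS1, hsplit]

/-- optimal Ratio-type bound for `χ₂` of general graphs.
If `G` has at least one edge, distinct eigenvalues `θ 0 > θ 1 > ⋯ > θ d` with `d ≥ 2` and
maximum degree `Δ`, then there is a largest eigenvalue `θ i` with `θ i ≤ −Δ/θ 0`; it has
`i ≥ 1` and `χ₂(G) ≥ (θ 0 − θ i)(θ 0 − θ (i−1)) / (Δ + θ i · θ (i−1))`. -/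
theorem stmt1 {V : Type*} [Fintype V] [DecidableEq V] (G : SimpleGraph V) [DecidableRel G.Adj]
    (hedge : ∃ u v, G.Adj u v)
    (d : ℕ) (hd : 2 ≤ d) (θ : Fin (d + 1) → ℝ) (hθ : StrictAnti θ)
    (hspec : {x : ℝ | IsAdjEigenvalue G x} = Set.range θ) :
    ∃ i : Fin (d + 1), 0 < i.1 ∧
      IsGreatest {x : ℝ | IsAdjEigenvalue G x ∧ x ≤ -(G.maxDegree : ℝ) / θ 0} (θ i) ∧
      (θ 0 - θ i) * (θ 0 - θ ⟨i.1 - 1, (Nat.sub_le i.1 1).trans_lt i.isLt⟩) /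
          ((G.maxDegree : ℝ) + θ i * θ ⟨i.1 - 1, (Nat.sub_le i.1 1).trans_lt i.isLt⟩)
        ≤ ((distChromaticNumber G 2).toNat : ℝ) := by
  classical
  obtain ⟨a0, b0, hab⟩ := hedge
  haveI : Nonempty V := ⟨a0⟩
  set A := G.adjMatrix ℝ with hAdef
  have hA : A.IsHermitian := by
    rw [Matrix.IsHermitian, Matrix.conjTranspose_eq_transpose_of_trivial, hAdef,
      SimpleGraph.transpose_adjMatrix]
  have hEig : ∀ μ : ℝ, IsAdjEigenvalue G μ ↔ ∃ m, θ m = μ := by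
    intro μ
    have := Set.ext_iff.mp hspec μ
    exact this
  -- Rayleigh bounds
  have hRayUp : ∀ x : V → ℝ, x ⬝ᵥ (A *ᵥ x) ≤ θ 0 * (x ⬝ᵥ x) := by
    intro x
    have h := eig_quad hA (-A) (fun μ => -μ)
      (fun μ w hw => by rw [neg_mulVec, hw, neg_smul])
      (r := -(θ 0))
      (fun μ w hw0 hw => by
        obtain ⟨m, hm⟩ := (hEig μ).mp ⟨w, hw0, hw⟩
        subst hm
        simpa using hθ.antitone (Fin.zero_le m)) x
    rw [neg_mulVec, dotProduct_neg] at h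
    linarith
  have hRayLo : ∀ x : V → ℝ, θ (Fin.last d) * (x ⬝ᵥ x) ≤ x ⬝ᵥ (A *ᵥ x) := by
    intro x
    exact eig_quad hA A id (fun μ w hw => hw)
      (fun μ w hw0 hw => by
        obtain ⟨m, hm⟩ := (hEig μ).mp ⟨w, hw0, hw⟩
        rw [← hm]
        exact hθ.antitone (Fin.le_last m)) x
  -- max degree vertex and test vectors
  obtain ⟨u0, hu0⟩ := G.exists_maximal_degree_vertex
  set Δ : ℝ := (G.maxDegree : ℝ) with hΔdef
  have hΔpos : 0 < Δ := by
    have h1 : 0 < G.degree a0 := by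
      rw [SimpleGraph.degree_pos_iff_exists_adj]
      exact ⟨b0, hab⟩
    have h2 : G.degree a0 ≤ G.maxDegree := G.degree_le_maxDegree a0
    rw [hΔdef]
    exact_mod_cast lt_of_lt_of_le h1 h2
  set e : V → ℝ := Pi.single u0 1 with he
  set s : V → ℝ := fun v => if G.Adj u0 v then 1 else 0 with hs
  set S : ℝ := s ⬝ᵥ (A *ᵥ s) with hSdef
  have hsnn : ∀ v, 0 ≤ s v := by
    intro v; rw [hs]; positivity
  have hsym : ∀ x y : V → ℝ, x ⬝ᵥ (A *ᵥ y) = y ⬝ᵥ (A *ᵥ x) := by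
    intro x y
    rw [dotProduct_mulVec, ← mulVec_transpose, hAdef, SimpleGraph.transpose_adjMatrix,
      ← hAdef, dotProduct_comm]
  have hdeg : (G.degree u0 : ℝ) = Δ := by rw [hΔdef, hu0]
  have hsum_s : ∀ v : V, ∑ u ∈ G.neighborFinset v, s u = (A *ᵥ s) v := by
    intro v; rw [hAdef, SimpleGraph.adjMatrix_mulVec_apply]
  have hS0 : 0 ≤ S := by
    rw [hSdef, dotProduct]
    refine Finset.sum_nonneg fun v _ => mul_nonneg (hsnn v) ?_
    rw [hAdef, SimpleGraph.adjMatrix_mulVec_apply]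
    exact Finset.sum_nonneg fun u _ => hsnn u
  have hee : e ⬝ᵥ e = 1 := by
    rw [he, single_dotProduct, one_mul, Pi.single_eq_same]
  have hes : e ⬝ᵥ s = 0 := by
    rw [he, single_dotProduct, one_mul, hs]
    simp [G.irrefl]
  have hse : s ⬝ᵥ e = 0 := by rw [dotProduct_comm, hes]
  have hss : s ⬝ᵥ s = Δ := by
    rw [hs, dotProduct]
    have : ∀ v : V, (if G.Adj u0 v then (1:ℝ) else 0) * (if G.Adj u0 v then (1:ℝ) else 0)
        = if G.Adj u0 v then (1:ℝ) else 0 := by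
      intro v; by_cases h : G.Adj u0 v <;> simp [h]
    simp only [this, Finset.sum_boole]
    rw [← hdeg, SimpleGraph.degree, SimpleGraph.neighborFinset_eq_filter]
  have heAs : e ⬝ᵥ (A *ᵥ s) = Δ := by
    rw [he, single_dotProduct, one_mul, hAdef, SimpleGraph.adjMatrix_mulVec_apply]
    have : ∀ u ∈ G.neighborFinset u0, s u = 1 := by
      intro u hu
      rw [SimpleGraph.mem_neighborFinset] at hu
      rw [hs]; simp [hu]
    rw [Finset.sum_congr rfl this, Finset.sum_const, ← hdeg, nsmul_eq_mul, mul_one,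
      SimpleGraph.degree]
  have heAe : e ⬝ᵥ (A *ᵥ e) = 0 := by
    rw [he, single_dotProduct, one_mul, hAdef, SimpleGraph.adjMatrix_mulVec_apply]
    refine Finset.sum_eq_zero fun u hu => ?_
    rw [SimpleGraph.mem_neighborFinset] at hu
    exact Pi.single_eq_of_ne hu.ne' 1
  have hsAe : s ⬝ᵥ (A *ᵥ e) = Δ := by rw [hsym, heAs]
  have hQab : ∀ a b : ℝ, (a • e + b • s) ⬝ᵥ (A *ᵥ (a • e + b • s))
      = 2*a*b*Δ + b^2*S := by
    intro a b
    have expand : (a • e + b • s) ⬝ᵥ (A *ᵥ (a • e + b • s))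
        = a*a*(e ⬝ᵥ (A *ᵥ e)) + a*b*(e ⬝ᵥ (A *ᵥ s)) + b*a*(s ⬝ᵥ (A *ᵥ e))
          + b*b*(s ⬝ᵥ (A *ᵥ s)) := by
      simp only [mulVec_add, mulVec_smul, dotProduct_add, add_dotProduct,
        dotProduct_smul, smul_dotProduct, smul_eq_mul]
      ring
    rw [expand, heAe, heAs, hsAe, ← hSdef]
    ring
  have hNab : ∀ a b : ℝ, (a • e + b • s) ⬝ᵥ (a • e + b • s) = a^2 + b^2*Δ := by
    intro a b
    have expand : (a • e + b • s) ⬝ᵥ (a • e + b • s)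
        = a*a*(e ⬝ᵥ e) + a*b*(e ⬝ᵥ s) + b*a*(s ⬝ᵥ e) + b*b*(s ⬝ᵥ s) := by
      simp only [dotProduct_add, add_dotProduct, dotProduct_smul, smul_dotProduct,
        smul_eq_mul]
      ring
    rw [expand, hee, hes, hse, hss]
    ring
  have hθ0pos : 0 < θ 0 := by
    have h1 := hRayUp ((1:ℝ) • e + (1:ℝ) • s)
    rw [hQab, hNab] at h1
    nlinarith
  have hF : θ 0 * S ≤ (θ 0)^2 * Δ - Δ^2 := by
    have h1 := hRayUp (Δ • e + (θ 0) • s)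
    rw [hQab, hNab] at h1
    nlinarith
  have hlastle : θ (Fin.last d) ≤ -Δ / θ 0 := by
    have h1 := hRayLo ((θ 0) • e + (-1:ℝ) • s)
    rw [hQab, hNab] at h1
    rw [le_div_iff₀ hθ0pos]
    nlinarith [mul_le_mul_of_nonneg_left h1 hθ0pos.le, hF, hΔpos, hθ0pos, sq_nonneg (θ 0)]
  -- the index i
  set v0 : ℝ := -Δ / θ 0 with hv0
  have hv0neg : v0 < 0 := by
    rw [hv0]
    exact div_neg_of_neg_of_pos (by linarith) hθ0pos
  set T : Finset (Fin (d+1)) := Finset.univ.filter (fun j => θ j ≤ v0) with hT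
  have hTne : T.Nonempty := ⟨Fin.last d, by simp [hT, hlastle]⟩
  set i : Fin (d+1) := T.min' hTne with hi
  have hiT : i ∈ T := T.min'_mem hTne
  have hθi : θ i ≤ v0 := by
    have := hiT
    simp only [hT, Finset.mem_filter] at this
    exact this.2
  have hile : ∀ j ∈ T, i ≤ j := fun j hj => T.min'_le j hj
  have hipos : 0 < i.1 := by
    rcases Nat.eq_zero_or_pos i.1 with h | h
    · exfalso
      have hi0 : i = 0 := Fin.ext h
      have : θ 0 ≤ v0 := by rw [← hi0]; exact hθi
      linarith
    · exact h
  refine ⟨i, hipos, ⟨⟨(hEig (θ i)).mpr ⟨i, rfl⟩, hθi⟩, ?_⟩, ?_⟩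
  · -- upper bound
    rintro x ⟨hx1, hx2⟩
    obtain ⟨m, hm⟩ := (hEig x).mp hx1
    have hmT : m ∈ T := by
      simp only [hT, Finset.mem_filter]
      exact ⟨Finset.mem_univ m, by rw [hm]; exact hx2⟩
    rw [← hm]
    exact hθ.antitone (hile m hmT)
  · -- the chromatic bound
    set i' : Fin (d+1) := ⟨i.1 - 1, (Nat.sub_le i.1 1).trans_lt i.isLt⟩ with hi'def
    by_cases hc1 : i.1 = 1
    · have h0 : i' = (0 : Fin (d+1)) := Fin.ext (by simp [hi'def, hc1])
      rw [h0, sub_self, mul_zero, zero_div]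
      exact Nat.cast_nonneg _
    · have hige : 2 ≤ i.1 := by omega
      have hi'pos : 0 < i'.1 := by simp [hi'def]; omega
      have hi'lt : i' < i := by
        rw [Fin.lt_def]; show i.1 - 1 < i.1; omega
      have hθii' : θ i < θ i' := hθ hi'lt
      have hi'notT : i' ∉ T := fun h => absurd (hile i' h) (not_le.mpr hi'lt)
      have hθi'gt : v0 < θ i' := by
        by_contra h
        exact hi'notT (by simp only [hT, Finset.mem_filter]; exact ⟨Finset.mem_univ _, not_lt.mp h⟩)
      have hpnn : ∀ m : Fin (d+1), 0 ≤ (θ m - θ i) * (θ m - θ i') := by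
        intro m
        rcases le_or_gt i m with h | h
        · have h1 : θ m ≤ θ i := hθ.antitone h
          have h2 : θ m ≤ θ i' := le_of_lt (lt_of_le_of_lt h1 hθii')
          have h3 := mul_nonneg (sub_nonneg.mpr h1) (sub_nonneg.mpr h2)
          calc (0:ℝ) ≤ (θ i - θ m) * (θ i' - θ m) := h3
            _ = (θ m - θ i) * (θ m - θ i') := by ring
        · have hmi' : m ≤ i' := by
            rw [Fin.le_def]
            exact Nat.le_sub_one_of_lt h
          have h1 : θ i' ≤ θ m := hθ.antitone hmi'
          have h2 : θ i ≤ θ m := le_of_lt (lt_of_lt_of_le hθii' h1)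
          exact mul_nonneg (sub_nonneg.mpr h2) (sub_nonneg.mpr h1)
      set c : ℝ := θ i * θ i' with hcdef
      by_cases hden : 0 < Δ + c
      swap
      · -- denominator nonpositive: LHS ≤ 0
        have hnum : 0 ≤ (θ 0 - θ i) * (θ 0 - θ i') := by
          have h01 : (0 : Fin (d+1)) < i := by
            rw [Fin.lt_def, Fin.val_zero]; exact hipos
          have h01' : (0 : Fin (d+1)) < i' := by
            rw [Fin.lt_def, Fin.val_zero]; exact hi'pos
          have h1 : θ i < θ 0 := hθ h01
          have h2 : θ i' < θ 0 := hθ h01'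
          exact mul_nonneg (sub_nonneg.mpr h1.le) (sub_nonneg.mpr h2.le)
        calc (θ 0 - θ i) * (θ 0 - θ i') / (Δ + c) ≤ 0 :=
              div_nonpos_iff.mpr (Or.inl ⟨hnum, not_lt.mp hden⟩)
          _ ≤ _ := Nat.cast_nonneg _
      · -- main case
        clear hQab hNab hF hlastle hRayUp hRayLo hS0 hee hes hse hss heAs heAe hsAe
          hsym hsnn hsum_s hθ0pos hdeg hv0neg hθi'gt hθi hSdef hs he hu0
        set k : ℕ := (distChromaticNumber G 2).toNat with hkdef
        have hcol : (powerGraph G 2).Colorable k :=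
          (powerGraph G 2).colorable_chromaticNumber_of_fintype
        obtain ⟨f⟩ := hcol
        have hk : 0 < k := by
          rcases Nat.eq_zero_or_pos k with h | h
          · exact absurd ((f a0).2) (by omega)
          · exact h
        obtain ⟨u, hu0ne, hu⟩ := (hEig (θ 0)).mpr ⟨0, rfl⟩
        have huu : 0 < u ⬝ᵥ u := by
          have h1 : 0 ≤ u ⬝ᵥ u := Finset.sum_nonneg fun v _ => mul_self_nonneg _
          exact h1.lt_of_ne fun h => hu0ne (dotProduct_self_eq_zero.mp h.symm)
        set bb : ℝ := -(θ i + θ i') with hbbdef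
        set M : Matrix V V ℝ := A*A + bb • A + c • (1 : Matrix V V ℝ) with hMdef
        set D : Matrix V V ℝ := Matrix.diagonal (fun v => (G.degree v : ℝ) + c) with hDdef
        set E : Matrix V V ℝ := M - D with hEdef
        have hMeig : ∀ (μ : ℝ) (w : V → ℝ), A *ᵥ w = μ • w →
            M *ᵥ w = ((μ - θ i)*(μ - θ i')) • w := by
          intro μ w hw
          have h2 : (A*A) *ᵥ w = (μ*μ) • w := by
            rw [← mulVec_mulVec, hw, mulVec_smul, hw, smul_smul]
          rw [hMdef, add_mulVec, add_mulVec, h2, smul_mulVec, hw,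
            smul_mulVec, one_mulVec]
          funext v
          simp only [Pi.add_apply, Pi.smul_apply, smul_eq_mul, hbbdef, hcdef]
          ring
        have hMpsd : ∀ x : V → ℝ, 0 ≤ x ⬝ᵥ (M *ᵥ x) := by
          intro x
          have h := eig_quad hA M (fun μ => (μ - θ i)*(μ - θ i')) hMeig (r := 0)
            (fun μ w hw0 hw => by
              obtain ⟨m, hm⟩ := (hEig μ).mp ⟨w, hw0, hw⟩
              subst hm
              exact hpnn m) x
          linarith [h]
        have hDle : ∀ x : V → ℝ, x ⬝ᵥ (D *ᵥ x) ≤ (Δ + c) * (x ⬝ᵥ x) := by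
          intro x
          rw [dotProduct, dotProduct, Finset.mul_sum]
          refine Finset.sum_le_sum fun v _ => ?_
          rw [hDdef, mulVec_diagonal]
          have hdv : (G.degree v : ℝ) ≤ Δ := by
            rw [hΔdef]; exact_mod_cast G.degree_le_maxDegree v
          nlinarith [mul_self_nonneg (x v)]
        have hEsub : ∀ x : V → ℝ, x ⬝ᵥ (E *ᵥ x) = x ⬝ᵥ (M *ᵥ x) - x ⬝ᵥ (D *ᵥ x) := by
          intro x
          rw [hEdef, sub_mulVec, dotProduct_sub]
        have hElow : ∀ x : V → ℝ, -(Δ + c) * (x ⬝ᵥ x) ≤ x ⬝ᵥ (E *ᵥ x) := by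
          intro x
          have h1 := hMpsd x
          have h2 := hDle x
          rw [hEsub]
          linarith
        have hEu : ((θ 0 - θ i)*(θ 0 - θ i') - (Δ + c)) * (u ⬝ᵥ u) ≤ u ⬝ᵥ (E *ᵥ u) := by
          have h1 : u ⬝ᵥ (M *ᵥ u) = ((θ 0 - θ i)*(θ 0 - θ i')) * (u ⬝ᵥ u) := by
            rw [hMeig _ _ hu, dotProduct_smul, smul_eq_mul]
          have h2 := hDle u
          rw [hEsub, h1]
          linarith
        have hEzero : ∀ v w : V, f v = f w → E v w = 0 := by
          intro v w hfvw
          have hnadj : ¬ (powerGraph G 2).Adj v w := fun hA' => (f.valid hA') hfvw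
          by_cases hvw : v = w
          · subst hvw
            rw [hEdef, Matrix.sub_apply, hMdef, Matrix.add_apply, Matrix.add_apply,
              Matrix.smul_apply, Matrix.smul_apply, Matrix.one_apply_eq, hDdef,
              Matrix.diagonal_apply_eq]
            rw [hAdef]
            rw [SimpleGraph.adjMatrix_mul_self_apply_self]
            simp [SimpleGraph.adjMatrix_apply, G.irrefl]
          · have hAvw : A v w = 0 := by
              rw [hAdef, SimpleGraph.adjMatrix_apply, if_neg]
              intro hadj
              exact hnadj (show v ≠ w ∧ G.Reachable v w ∧ G.dist v w ≤ 2 from ⟨hvw, hadj.reachable,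
                le_trans (SimpleGraph.dist_le (SimpleGraph.Walk.cons hadj SimpleGraph.Walk.nil))
                  (by simp)⟩)
            have hA2vw : (A*A) v w = 0 := by
              rw [Matrix.mul_apply]
              refine Finset.sum_eq_zero fun z _ => ?_
              by_cases hz1 : G.Adj v z
              · by_cases hz2 : G.Adj z w
                · exfalso
                  refine hnadj (show v ≠ w ∧ G.Reachable v w ∧ G.dist v w ≤ 2 from ⟨hvw, ⟨SimpleGraph.Walk.cons hz1 (SimpleGraph.Walk.cons hz2 SimpleGraph.Walk.nil)⟩, ?_⟩)
                  refine le_trans (SimpleGraph.dist_le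
                    (SimpleGraph.Walk.cons hz1 (SimpleGraph.Walk.cons hz2 SimpleGraph.Walk.nil))) ?_
                  simp
                · simp [hAdef, SimpleGraph.adjMatrix_apply, hz2]
              · simp [hAdef, SimpleGraph.adjMatrix_apply, hz1]
            rw [hEdef, Matrix.sub_apply, hMdef, Matrix.add_apply, Matrix.add_apply,
              Matrix.smul_apply, Matrix.smul_apply, hA2vw, hAvw,
              Matrix.one_apply_ne hvw, hDdef, Matrix.diagonal_apply_ne _ hvw]
            simp
        have hcore := hoffman_core E k hk (fun v => f v) hEzero u
          ((θ 0 - θ i)*(θ 0 - θ i') - (Δ + c)) (Δ + c) hEu hElow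
        rw [div_le_iff₀ hden]
        have h1 : ((θ 0 - θ i)*(θ 0 - θ i')) * (u ⬝ᵥ u) ≤ ((k:ℝ) * (Δ + c)) * (u ⬝ᵥ u) := by
          linarith only [hcore]
        exact le_of_mul_le_mul_right h1 huu
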